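/- Let a > 3, set τ_a = a^a/(a−1)^{a−1}, let c ∈ ℂ⁴, and define ψ₀ : ℝ³ → ℂ⁴ by ψ₀(x) = exp( (a/(a−1))^a (1+|x|)^{1−a} ) c. Then all three integrals below are finite and equal: τ_a² ∫_{ℝ³} |ψ₀(x)|² (1+|x|)^{−a} dx = τ_a² ∫_{ℝ³} |((1+2S·L)ψ₀)(x)|² (1+|x|)^{−a} dx = ∫_{ℝ³} |−i Σ_{j=1}^3 α_j ∂_jψ₀(x)|² (1+|x|)^{a} dx. In particular, for c ≠ 0, ψ₀ is a nonzero minimizer attaining equality in the weighted Hardy–Dirac inequality with m = 0 and weights ω = η = (1+|x|)^a. -/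

import Mathlib

/-!
`ψ₀ = g(|x|) c` is radial, so `x × ∇ψ₀ = 0` and `(1 + 2S·L)ψ₀ = ψ₀`. Away from the origin
`−iα·∇ψ₀ = −i g'(|x|) (α·x̂) c`, and `|(α·u) c| = |u| |c|` because the `α_j` anticommute and square
to the identity. The profile `g(r) = exp((a/(a−1))^a (1+r)^{1−a})` solves
`g' = −τ_a (1+r)^{−a} g`, so `|−iα·∇ψ₀|² (1+|x|)^a = τ_a² |ψ₀|² (1+|x|)^{−a}` almost everywhere.
Finiteness: `g ≤ exp((a/(a−1))^a)` and `(1+|x|)^{−a}` is integrable on `ℝ³` since `a > 3`.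
-/

open MeasureTheory Real ComplexConjugate
open scoped InnerProductSpace

noncomputable section

abbrev R3 := EuclideanSpace ℝ (Fin 3)
abbrev C4 := EuclideanSpace ℂ (Fin 4)

/-- The Pauli matrices. -/
def pauli : Fin 3 → Matrix (Fin 2) (Fin 2) ℂ
  | 0 => !![0, 1; 1, 0]
  | 1 => !![0, -Complex.I; Complex.I, 0]
  | 2 => !![1, 0; 0, -1]

/-- Reindex a 2×2 block matrix as a 4×4 matrix. -/
def blocks4 (A B C D : Matrix (Fin 2) (Fin 2) ℂ) : Matrix (Fin 4) (Fin 4) ℂ :=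
  Matrix.reindex finSumFinEquiv finSumFinEquiv (Matrix.fromBlocks A B C D)

/-- The Dirac alpha matrices. -/
def diracAlpha (j : Fin 3) : Matrix (Fin 4) (Fin 4) ℂ :=
  blocks4 0 (pauli j) (pauli j) 0

/-- The Dirac beta matrix. -/
def diracBeta : Matrix (Fin 4) (Fin 4) ℂ :=
  blocks4 1 0 0 (-1)

/-- The spin matrices Sⱼ. -/
def spinS (j : Fin 3) : Matrix (Fin 4) (Fin 4) ℂ :=
  (1/2 : ℂ) • blocks4 (pauli j) 0 0 (pauli j)

/-- Action of a 4×4 complex matrix on ℂ⁴. -/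
def act (M : Matrix (Fin 4) (Fin 4) ℂ) (v : C4) : C4 :=
  WithLp.toLp 2 (M.mulVec v)

/-- Partial derivative of a ℂ⁴-valued function on ℝ³. -/
def pderiv3 (j : Fin 3) (ψ : R3 → C4) (x : R3) : C4 :=
  fderiv ℝ ψ x (EuclideanSpace.single j 1)

/-- The free Dirac operator with mass m. -/
def diracOp (m : ℝ) (ψ : R3 → C4) (x : R3) : C4 :=
  (-Complex.I) • ∑ j, act (diracAlpha j) (pderiv3 j ψ x) + (m : ℂ) • act diracBeta (ψ x)

/-- The massless Dirac operator `-iα·∇`. -/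
def masslessDirac (ψ : R3 → C4) (x : R3) : C4 :=
  (-Complex.I) • ∑ j, act (diracAlpha j) (pderiv3 j ψ x)

/-- The orbital angular momentum component Lⱼψ = −i (x × ∇ψ)ⱼ. -/
def orbL (j : Fin 3) (ψ : R3 → C4) (x : R3) : C4 :=
  (-Complex.I) • ((x (j + 1) : ℂ) • pderiv3 (j + 2) ψ x - (x (j + 2) : ℂ) • pderiv3 (j + 1) ψ x)

/-- The spin-orbit operator (1 + 2 S·L). -/
def spinOrbit (ψ : R3 → C4) (x : R3) : C4 :=
  ψ x + (2 : ℂ) • ∑ j, act (spinS j) (orbL j ψ x)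

/-- The radial derivative of a scalar function on ℝ³. -/
def radialDeriv (f : R3 → ℝ) (x : R3) : ℝ :=
  ∑ j, (x j / ‖x‖) * fderiv ℝ f x (EuclideanSpace.single j 1)

/-- The radial derivative of a ℂ⁴-valued function on ℝ³. -/
def radialDerivV (ψ : R3 → C4) (x : R3) : C4 :=
  ∑ j, ((x j / ‖x‖ : ℝ) : ℂ) • pderiv3 j ψ x

/-- α·x̂, the Dirac matrix contracted with the unit radial vector. -/
def alphaHat (x : R3) : Matrix (Fin 4) (Fin 4) ℂ :=
  ∑ j, ((x j / ‖x‖ : ℝ) : ℂ) • diracAlpha j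

/-- A function on ℝ³ is radial if it depends only on the norm of its argument. -/
def IsRadial {E : Type*} (f : R3 → E) : Prop :=
  ∀ x y : R3, ‖x‖ = ‖y‖ → f x = f y

lemma diracAlpha_zero : diracAlpha 0 = !![0,0,0,1; 0,0,1,0; 0,1,0,0; 1,0,0,0] := by
  ext i j; fin_cases i <;> fin_cases j <;> rfl

lemma diracAlpha_one :
    diracAlpha 1 = !![0,0,0,-Complex.I; 0,0,Complex.I,0; 0,-Complex.I,0,0; Complex.I,0,0,0] := by
  ext i j; fin_cases i <;> fin_cases j <;> rfl

lemma diracAlpha_two : diracAlpha 2 = !![0,0,1,0; 0,0,0,-1; 1,0,0,0; 0,-1,0,0] := by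
  ext i j; fin_cases i <;> fin_cases j <;> rfl

lemma act_smul (M : Matrix (Fin 4) (Fin 4) ℂ) (z : ℂ) (v : C4) : act M (z • v) = z • act M v := by
  simp only [act, WithLp.ofLp_smul, Matrix.mulVec_smul, WithLp.toLp_smul]

lemma act_zero (M : Matrix (Fin 4) (Fin 4) ℂ) : act M 0 = 0 := by
  simp only [act, WithLp.ofLp_zero, Matrix.mulVec_zero, WithLp.toLp_zero]

lemma norm_sum_smul_act_diracAlpha_sq (u : Fin 3 → ℝ) (c : C4) :
    ‖∑ j, (u j : ℂ) • act (diracAlpha j) c‖ ^ 2 = (∑ j, u j ^ 2) * ‖c‖ ^ 2 := by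
  simp only [EuclideanSpace.norm_sq_eq, Complex.sq_norm]
  simp only [Fin.sum_univ_three, Fin.sum_univ_four, diracAlpha_zero, diracAlpha_one,
    diracAlpha_two, PiLp.add_apply, PiLp.smul_apply, act, Matrix.mulVec,
    dotProduct, smul_eq_mul]
  norm_num [Matrix.cons_val_zero, Matrix.cons_val_one, Matrix.cons_val_two,
    Matrix.cons_val_three, Matrix.head_cons]
  simp only [Complex.normSq_apply, Complex.add_re, Complex.add_im, Complex.mul_re, Complex.mul_im,
    Complex.ofReal_re, Complex.ofReal_im, Complex.I_re, Complex.I_im, Complex.neg_re,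
    Complex.neg_im]
  generalize (c 0).re = p0, (c 0).im = q0, (c 1).re = p1, (c 1).im = q1, (c 2).re = p2,
    (c 2).im = q2, (c 3).re = p3, (c 3).im = q3
  ring

lemma hasFDerivAt_norm_of_ne_zero {F : Type*} [NormedAddCommGroup F] [InnerProductSpace ℝ F]
    {x : F} (hx : x ≠ 0) : HasFDerivAt (‖·‖) (‖x‖⁻¹ • innerSL ℝ x) x := by
  have h := (hasStrictFDerivAt_norm_sq x).hasFDerivAt.sqrt (pow_ne_zero 2 (norm_ne_zero_iff.2 hx))
  simp only [Real.sqrt_sq (norm_nonneg _)] at h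
  convert h using 1
  rw [← Nat.cast_smul_eq_nsmul ℝ, smul_smul]
  congr 1
  field_simp
  norm_num

section Radial

variable {f : ℝ → ℝ} (c : C4)

lemma pderiv3_radial_smul {x : R3} (hx : x ≠ 0) (hf : DifferentiableAt ℝ f ‖x‖) (j : Fin 3) :
    pderiv3 j (fun y => (f ‖y‖ : ℂ) • c) x = ((deriv f ‖x‖ * (x j / ‖x‖) : ℝ) : ℂ) • c := by
  have h : HasFDerivAt (fun y : R3 => f ‖y‖ • c)
      ((deriv f ‖x‖ • (‖x‖⁻¹ • innerSL ℝ x)).smulRight c) x :=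
    (hf.hasDerivAt.comp_hasFDerivAt x (hasFDerivAt_norm_of_ne_zero hx)).smul_const c
  simp only [Complex.coe_smul, pderiv3, h.fderiv]
  simp [EuclideanSpace.inner_single_right, div_eq_inv_mul]

lemma orbL_radial_smul_eq_zero (hf : ∀ r, 0 < r → DifferentiableAt ℝ f r) (j : Fin 3) (x : R3) :
    orbL j (fun y => (f ‖y‖ : ℂ) • c) x = 0 := by
  rcases eq_or_ne x 0 with rfl | hx
  · simp [orbL]
  have hfx := hf ‖x‖ (norm_pos_iff.2 hx)
  rw [orbL, pderiv3_radial_smul c hx hfx, pderiv3_radial_smul c hx hfx, smul_smul, smul_smul,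
    ← sub_smul]
  have hcross : (x (j + 1) : ℂ) * ((deriv f ‖x‖ * (x (j + 2) / ‖x‖) : ℝ) : ℂ) -
      (x (j + 2) : ℂ) * ((deriv f ‖x‖ * (x (j + 1) / ‖x‖) : ℝ) : ℂ) = 0 := by
    push_cast
    ring
  rw [hcross, zero_smul, smul_zero]

lemma spinOrbit_radial_smul (hf : ∀ r, 0 < r → DifferentiableAt ℝ f r) :
    spinOrbit (fun y => (f ‖y‖ : ℂ) • c) = fun y => (f ‖y‖ : ℂ) • c := by
  ext1 x
  simp only [spinOrbit, orbL_radial_smul_eq_zero c hf, act_zero, Finset.sum_const_zero, smul_zero,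
    add_zero]

lemma norm_masslessDirac_radial_smul_sq {x : R3} (hx : x ≠ 0) (hf : DifferentiableAt ℝ f ‖x‖) :
    ‖masslessDirac (fun y => (f ‖y‖ : ℂ) • c) x‖ ^ 2 = deriv f ‖x‖ ^ 2 * ‖c‖ ^ 2 := by
  have hunit : ∑ j, (x j / ‖x‖) ^ 2 = 1 := by
    have := EuclideanSpace.norm_sq_eq x
    simp only [Real.norm_eq_abs, sq_abs] at this
    simp only [div_pow, ← Finset.sum_div, ← this]
    exact div_self (pow_ne_zero 2 (norm_ne_zero_iff.2 hx))
  simp only [masslessDirac, norm_smul, norm_neg, Complex.norm_I, one_mul,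
    pderiv3_radial_smul c hx hf, act_smul]
  rw [norm_sum_smul_act_diracAlpha_sq]
  simp only [mul_pow, ← Finset.mul_sum, hunit, mul_one]

end Radial

def minimizerProfile (a r : ℝ) : ℝ :=
  Real.exp ((a / (a - 1)) ^ a * (1 + r) ^ (1 - a))

section MinimizerProfile

variable {a : ℝ}

lemma div_sub_one_rpow_mul_one_sub (ha : 1 < a) :
    (a / (a - 1)) ^ a * (1 - a) = -(a ^ a / (a - 1) ^ (a - 1)) := by
  have ha1 : 0 < a - 1 := by linarith
  rw [Real.div_rpow (by linarith) ha1.le, Real.rpow_sub ha1, Real.rpow_one]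
  field_simp
  ring

lemma hasDerivAt_minimizerProfile (ha : 1 < a) {r : ℝ} (hr : -1 < r) :
    HasDerivAt (minimizerProfile a)
      (-(a ^ a / (a - 1) ^ (a - 1)) * (1 + r) ^ (-a) * minimizerProfile a r) r := by
  have h := ((((hasDerivAt_id r).const_add 1).rpow_const (p := 1 - a)
    (Or.inl (by simp; linarith))).const_mul ((a / (a - 1)) ^ a)).exp
  simp only [id] at h
  unfold minimizerProfile
  convert h using 1
  rw [← div_sub_one_rpow_mul_one_sub ha, show 1 - a - 1 = -a by ring]
  ring

lemma minimizerProfile_le (ha : 1 < a) {r : ℝ} (hr : 0 ≤ r) :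
    minimizerProfile a r ≤ Real.exp ((a / (a - 1)) ^ a) := by
  refine Real.exp_le_exp.2 (mul_le_of_le_one_right (by positivity) ?_)
  exact Real.rpow_le_one_of_one_le_of_nonpos (by linarith) (by linarith)

lemma norm_masslessDirac_minimizerProfile_smul_sq_mul (ha : 1 < a) (c : C4) {x : R3}
    (hx : x ≠ 0) :
    ‖masslessDirac (fun y => (minimizerProfile a ‖y‖ : ℂ) • c) x‖ ^ 2 * (1 + ‖x‖) ^ a =
      (a ^ a / (a - 1) ^ (a - 1)) ^ 2 *
        (‖(minimizerProfile a ‖x‖ : ℂ) • c‖ ^ 2 * (1 + ‖x‖) ^ (-a)) := by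
  have hderiv := hasDerivAt_minimizerProfile ha (r := ‖x‖) (by linarith [norm_nonneg x])
  have hpos : 0 < 1 + ‖x‖ := by positivity
  rw [norm_masslessDirac_radial_smul_sq c hx hderiv.differentiableAt, hderiv.deriv, norm_smul,
    Complex.norm_real]
  have hweight : ((1 + ‖x‖) ^ (-a)) ^ 2 * (1 + ‖x‖) ^ a = (1 + ‖x‖) ^ (-a) := by
    rw [sq, mul_assoc, ← Real.rpow_add hpos, neg_add_cancel, Real.rpow_zero, mul_one]
  simp only [Real.norm_eq_abs, mul_pow, sq_abs, neg_sq]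
  linear_combination
    (a ^ a / (a - 1) ^ (a - 1)) ^ 2 * minimizerProfile a ‖x‖ ^ 2 * ‖c‖ ^ 2 * hweight

lemma integrable_norm_minimizerProfile_smul_sq_mul (ha : 3 < a) (c : C4) :
    Integrable (fun x : R3 => ‖(minimizerProfile a ‖x‖ : ℂ) • c‖ ^ 2 * (1 + ‖x‖) ^ (-a)) := by
  have hweight : Integrable (fun x : R3 => (1 + ‖x‖) ^ (-a)) :=
    integrable_one_add_norm (by simpa using ha)
  refine hweight.bdd_mul (c := Real.exp ((a / (a - 1)) ^ a) ^ 2 * ‖c‖ ^ 2) ?_ ?_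
  · have hmeas : Measurable fun x : R3 => ‖(minimizerProfile a ‖x‖ : ℂ) • c‖ ^ 2 := by
      unfold minimizerProfile
      fun_prop
    exact hmeas.aestronglyMeasurable
  refine Filter.Eventually.of_forall fun x => ?_
  rw [norm_pow, norm_norm, norm_smul, Complex.norm_real, Real.norm_eq_abs, mul_pow, sq_abs]
  gcongr
  · exact (Real.exp_pos _).le
  · exact minimizerProfile_le (by linarith) (norm_nonneg x)

end MinimizerProfile

/-- The explicit minimiser for the polynomial weight in the massless case:
all three integrals are finite and equal. -/
theorem attained_polynomial_weight (a : ℝ) (ha : 3 < a) (c : C4) (ψ₀ : R3 → C4)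
    (hψ₀ : ∀ x : R3, ψ₀ x =
      (Real.exp ((a / (a - 1)) ^ a * (1 + ‖x‖) ^ (1 - a)) : ℂ) • c) :
    (Integrable (fun x : R3 => ‖ψ₀ x‖ ^ 2 * (1 + ‖x‖) ^ (-a)) ∧
      Integrable (fun x : R3 => ‖spinOrbit ψ₀ x‖ ^ 2 * (1 + ‖x‖) ^ (-a)) ∧
      Integrable (fun x : R3 => ‖masslessDirac ψ₀ x‖ ^ 2 * (1 + ‖x‖) ^ a)) ∧
    ((a ^ a / (a - 1) ^ (a - 1)) ^ 2 * ∫ x : R3, ‖ψ₀ x‖ ^ 2 * (1 + ‖x‖) ^ (-a) =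
      (a ^ a / (a - 1) ^ (a - 1)) ^ 2 *
        ∫ x : R3, ‖spinOrbit ψ₀ x‖ ^ 2 * (1 + ‖x‖) ^ (-a)) ∧
    ((a ^ a / (a - 1) ^ (a - 1)) ^ 2 *
        ∫ x : R3, ‖spinOrbit ψ₀ x‖ ^ 2 * (1 + ‖x‖) ^ (-a) =
      ∫ x : R3, ‖masslessDirac ψ₀ x‖ ^ 2 * (1 + ‖x‖) ^ a) ∧
    (c ≠ 0 → ψ₀ ≠ 0) := by
  obtain rfl : ψ₀ = fun x => (minimizerProfile a ‖x‖ : ℂ) • c := funext hψ₀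
  have ha1 : 1 < a := by linarith
  have hdiff : ∀ r, 0 < r → DifferentiableAt ℝ (minimizerProfile a) r := fun r hr =>
    (hasDerivAt_minimizerProfile ha1 (by linarith)).differentiableAt
  have hdirac : (fun x : R3 => ‖masslessDirac (fun y => (minimizerProfile a ‖y‖ : ℂ) • c) x‖ ^ 2 *
      (1 + ‖x‖) ^ a) =ᵐ[volume] fun x => (a ^ a / (a - 1) ^ (a - 1)) ^ 2 *
        (‖(minimizerProfile a ‖x‖ : ℂ) • c‖ ^ 2 * (1 + ‖x‖) ^ (-a)) := by
    filter_upwards [Measure.ae_ne volume 0] with x hx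
    exact norm_masslessDirac_minimizerProfile_smul_sq_mul ha1 c hx
  have hint := integrable_norm_minimizerProfile_smul_sq_mul ha c
  rw [spinOrbit_radial_smul c hdiff, integral_congr_ae hdirac, integral_const_mul]
  refine ⟨⟨hint, hint, (hint.const_mul _).congr hdirac.symm⟩, rfl, rfl, fun hc h0 => hc ?_⟩
  simpa [minimizerProfile] using congrFun h0 0
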